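/- arXiv:2501.17390 — 2 statements merged into one kernel-verified Lean document; each statement's English description precedes it below -/
import Mathlib

section
/- For α > 0 and all t ∈ ℝ, the derivative of E_α satisfies (d/dt) E_α(t) = (1/α) E_{α,α}(t). -/
open Real MeasureTheory Set

/-- Two-parameter Mittag-Leffler function `E_{α,β}(t) = Σ t^k / Γ(α k + β)`. -/
noncomputable def mittagLeffler (α β t : ℝ) : ℝ := ∑' k : ℕ, t ^ k / Real.Gamma (α * k + β)

/-- One-parameter Mittag-Leffler function `E_α = E_{α,1}`. -/
noncomputable def ML (α t : ℝ) : ℝ := mittagLeffler α 1 t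

/-- The Riemann-Liouville integral `I^{1-α}(x - x 0)` appearing in the Caputo derivative. -/
noncomputable def caputoKernel (α : ℝ) (x : ℝ → ℝ) (s : ℝ) : ℝ :=
  (1 / Real.Gamma (1 - α)) * ∫ r in (0:ℝ)..s, (s - r) ^ (-α) * (x r - x 0)

/-- Caputo fractional derivative of order `α`. -/
noncomputable def caputo (α : ℝ) (x : ℝ → ℝ) (t : ℝ) : ℝ := deriv (caputoKernel α x) t
/-! `E_α(t) = ∑ t^k / Γ(αk+1)` is a power series with infinite radius of convergence, because
`Γ(x+1) ≥ ⌊x⌋!` outgrows every exponential `b^x`. Hence it may be differentiated term by term, and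
`Γ(α(k+1)+1) = α(k+1) Γ(αk+α)` turns the coefficient `(k+1) / Γ(α(k+1)+1)` of the derived series
into `α⁻¹ / Γ(αk+α)`. -/

open Filter Topology
open scoped Nat

namespace Real

theorem factorial_floor_le_Gamma_add_one {x : ℝ} (hx : 1 ≤ x) : (⌊x⌋₊ ! : ℝ) ≤ Gamma (x + 1) := by
  rw [← Gamma_nat_eq_factorial]
  have hfloor : (1 : ℝ) ≤ ⌊x⌋₊ := by exact_mod_cast Nat.le_floor (by exact_mod_cast hx)
  refine Gamma_strictMonoOn_Ici.monotoneOn ?_ ?_ ?_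
  · simp only [mem_Ici]; linarith
  · simp only [mem_Ici]; linarith
  · linarith [Nat.floor_le (zero_le_one.trans hx)]

theorem tendsto_rpow_div_Gamma_add_one_atTop {b : ℝ} (hb : 0 ≤ b) :
    Tendsto (fun x => b ^ x / Gamma (x + 1)) atTop (𝓝 0) := by
  set c := max b 1
  have hc : 1 ≤ c := le_max_right b 1
  have hlim : Tendsto (fun x : ℝ => c * (c ^ ⌊x⌋₊ / ⌊x⌋₊ !)) atTop (𝓝 0) := by
    simpa using ((FloorSemiring.tendsto_pow_div_factorial_atTop c).comp
      tendsto_nat_floor_atTop).const_mul c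
  refine squeeze_zero' ?_ ?_ hlim
  · filter_upwards [eventually_ge_atTop 0] with x hx
    have := Gamma_pos_of_pos (show 0 < x + 1 by linarith)
    positivity
  · filter_upwards [eventually_ge_atTop 1] with x hx
    have hx0 : 0 ≤ x := zero_le_one.trans hx
    have hpow : b ^ x ≤ c ^ (⌊x⌋₊ + 1) :=
      calc b ^ x ≤ c ^ x := rpow_le_rpow hb (le_max_left b 1) hx0
        _ ≤ c ^ ((⌊x⌋₊ + 1 : ℕ) : ℝ) :=
          rpow_le_rpow_of_exponent_le hc (by push_cast; exact (Nat.lt_floor_add_one x).le)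
        _ = c ^ (⌊x⌋₊ + 1) := rpow_natCast c _
    calc b ^ x / Gamma (x + 1) ≤ c ^ (⌊x⌋₊ + 1) / ⌊x⌋₊ ! :=
          div_le_div₀ (by positivity) hpow (by positivity) (factorial_floor_le_Gamma_add_one hx)
      _ = c * (c ^ ⌊x⌋₊ / ⌊x⌋₊ !) := by ring

theorem summable_pow_div_Gamma_mul_add_one {α : ℝ} (hα : 0 < α) (r : ℝ) :
    Summable fun k : ℕ => r ^ k / Gamma (α * k + 1) := by
  have hΓ : ∀ k : ℕ, 0 < Gamma (α * k + 1) := fun k => Gamma_pos_of_pos (by positivity)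
  have hr : 0 ≤ 2 * |r| := by positivity
  -- `(2|r|)^k = b^(α k)` with `b = (2|r|)^(1/α)`
  have hlim : Tendsto (fun k : ℕ => (2 * |r|) ^ k / Gamma (α * k + 1)) atTop (𝓝 0) := by
    refine ((tendsto_rpow_div_Gamma_add_one_atTop (rpow_nonneg hr (1 / α))).comp
      (tendsto_natCast_atTop_atTop.const_mul_atTop hα)).congr fun k => ?_
    simp only [Function.comp_apply, ← rpow_mul hr, one_div, inv_mul_cancel_left₀ hα.ne',
      rpow_natCast]
  refine Summable.of_norm_bounded_eventually summable_geometric_two ?_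
  rw [Nat.cofinite_eq_atTop]
  filter_upwards [hlim.eventually (ge_mem_nhds zero_lt_one)] with k hk
  calc ‖r ^ k / Gamma (α * k + 1)‖ = (2 * |r|) ^ k / Gamma (α * k + 1) * (1 / 2) ^ k := by
        rw [norm_div, norm_pow, norm_of_nonneg (hΓ k).le, norm_eq_abs, div_mul_eq_mul_div,
          ← mul_pow]
        congr 2
        ring
    _ ≤ 1 * (1 / 2) ^ k := by gcongr
    _ = (1 / 2) ^ k := one_mul _

end Real

theorem hasDerivAt_tsum_mul_pow {a : ℕ → ℝ} (ha : ∀ r : ℝ, Summable fun k => a k * r ^ k)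
    (t : ℝ) : HasDerivAt (fun x => ∑' k, a k * x ^ k) (∑' k, (k + 1) * a (k + 1) * t ^ k) t := by
  set R := |t| + 1
  have hR : 1 ≤ R := by simp [R]
  have ht : t ∈ Metric.ball 0 R := by simp [R]
  have hu : Summable fun k => |a k| * (2 * R) ^ k := by
    simpa [abs_mul, abs_of_nonneg (by positivity : 0 ≤ 2 * R)] using (ha (2 * R)).abs
  have hbound : ∀ (k : ℕ), ∀ x ∈ Metric.ball (0 : ℝ) R,
      ‖a k * (k * x ^ (k - 1))‖ ≤ |a k| * (2 * R) ^ k := by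
    intro k x hx
    have hxR : |x| ≤ R := by simpa using (Metric.mem_ball.1 hx).le
    have hk : (k : ℝ) ≤ 2 ^ k := by exact_mod_cast (Nat.lt_two_pow_self).le
    have hxk : |x| ^ (k - 1) ≤ R ^ k :=
      (pow_le_pow_left₀ (abs_nonneg x) hxR _).trans (pow_le_pow_right₀ hR (Nat.sub_le k 1))
    rw [norm_mul, norm_mul, norm_pow, Real.norm_eq_abs, Real.norm_eq_abs, Real.norm_eq_abs,
      Nat.abs_cast, mul_pow]
    gcongr
  have hderiv := hasDerivAt_tsum_of_isPreconnected hu Metric.isOpen_ball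
    (convex_ball 0 R).isPreconnected (fun k x _ => (hasDerivAt_pow k x).const_mul (a k)) hbound
    ht (ha t) ht
  refine hderiv.congr_deriv ?_
  rw [(Summable.of_norm_bounded hu fun k => hbound k t ht).tsum_eq_zero_add]
  simp only [CharP.cast_eq_zero, zero_mul, mul_zero, zero_add, Nat.cast_add, Nat.cast_one,
    Nat.add_sub_cancel]
  exact tsum_congr fun k => by ring

/-- The derivative of `E_α` is `(1/α) E_{α,α}`. -/
theorem deriv_mittagLeffler (α : ℝ) (hα : 0 < α) (t : ℝ) :
    HasDerivAt (ML α) ((1 / α) * mittagLeffler α α t) t := by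
  set a : ℕ → ℝ := fun k => (Gamma (α * k + 1))⁻¹
  have hML : ML α = fun x => ∑' k, a k * x ^ k :=
    funext fun x => tsum_congr fun k => div_eq_inv_mul _ _
  have hcoeff : ∀ k : ℕ, (k + 1) * a (k + 1) = 1 / α * (1 / Gamma (α * k + α)) := by
    intro k
    have hs : α * (k + 1) ≠ 0 := by positivity
    have hΓ : Gamma (α * (k + 1) + 1) = α * (k + 1) * Gamma (α * k + α) := by
      rw [Gamma_add_one hs, mul_add_one]
    simp only [a, Nat.cast_add, Nat.cast_one, hΓ]
    field_simp
  have hsum : ∀ r : ℝ, Summable fun k => a k * r ^ k := fun r => by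
    simpa only [a, div_eq_inv_mul] using Real.summable_pow_div_Gamma_mul_add_one hα r
  rw [hML, mittagLeffler, ← tsum_mul_left]
  exact (hasDerivAt_tsum_mul_pow hsum t).congr_deriv (tsum_congr fun k => by rw [hcoeff]; ring)
end

section
/- For any square matrix A ∈ ℝ^{k×k}, Δ_k Γ(A) = A Δ_k, where Γ(A) = [[diag(A) + (A − diag(A))⁺, (A − diag(A))⁻], [(A − diag(A))⁻, diag(A) + (A − diag(A))⁺]] is the min-Metzler representation of A and Δ_k = [I_k, −I_k]. Moreover, Γ(A) is a Metzler matrix (all off-diagonal entries are nonnegative). -/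
open Real MeasureTheory Set

/-- The block matrix `Δ_k = [I_k, -I_k]`. -/
noncomputable def Delta (k : ℕ) : Matrix (Fin k) (Fin k ⊕ Fin k) ℝ :=
  Matrix.fromCols 1 (-1)

/-- Min-positive representation `π(x) = (x⁺; x⁻)` of a vector. -/
noncomputable def piRep {k : ℕ} (x : Fin k → ℝ) : Fin k ⊕ Fin k → ℝ :=
  Sum.elim (fun i => max (x i) 0) (fun i => max (-x i) 0)

/-- Componentwise positive part of a matrix. -/
noncomputable def posM {m l : Type*} (M : Matrix m l ℝ) : Matrix m l ℝ :=
  fun i j => max (M i j) 0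

/-- Componentwise negative part of a matrix. -/
noncomputable def negM {m l : Type*} (M : Matrix m l ℝ) : Matrix m l ℝ :=
  fun i j => max (-(M i j)) 0

/-- Min-positive representation `Π(M)` of a matrix. -/
noncomputable def PiM {k l : ℕ} (M : Matrix (Fin k) (Fin l) ℝ) :
    Matrix (Fin k ⊕ Fin k) (Fin l ⊕ Fin l) ℝ :=
  Matrix.fromBlocks (posM M) (negM M) (negM M) (posM M)

/-- Min-Metzler representation `Γ(A)` of a square matrix. -/
noncomputable def GammaM {k : ℕ} (A : Matrix (Fin k) (Fin k) ℝ) :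
    Matrix (Fin k ⊕ Fin k) (Fin k ⊕ Fin k) ℝ :=
  Matrix.fromBlocks
    (Matrix.diagonal (fun i => A i i) + posM (A - Matrix.diagonal (fun i => A i i)))
    (negM (A - Matrix.diagonal (fun i => A i i)))
    (negM (A - Matrix.diagonal (fun i => A i i)))
    (Matrix.diagonal (fun i => A i i) + posM (A - Matrix.diagonal (fun i => A i i)))

/-! `Δ_k` intertwines every block matrix `[[B, C], [C, B]]` with `B - C`, and the two blocks of
`Γ(A)` differ by `diag(A) + N⁺ - N⁻ = A`, where `N = A - diag(A)`. Off the diagonal, `Γ(A)` only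
has entries of `N⁺` and `N⁻`. -/

def Matrix.IsMetzler {n : Type*} (M : Matrix n n ℝ) : Prop :=
  Pairwise fun i j => 0 ≤ M i j

lemma posM_nonneg {m l : Type*} (M : Matrix m l ℝ) (i : m) (j : l) : 0 ≤ posM M i j :=
  le_max_right _ _

lemma negM_nonneg {m l : Type*} (M : Matrix m l ℝ) (i : m) (j : l) : 0 ≤ negM M i j :=
  le_max_right _ _

lemma posM_sub_negM {m l : Type*} (M : Matrix m l ℝ) : posM M - negM M = M := by
  ext i j
  simp only [Matrix.sub_apply, posM, negM]
  rcases le_total (M i j) 0 with h | h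
  · rw [max_eq_right h, max_eq_left (neg_nonneg.mpr h)]
    ring
  · rw [max_eq_left h, max_eq_right (neg_nonpos.mpr h)]
    ring

lemma diagonal_add_posM_sub_negM {n : Type*} [DecidableEq n] (d : n → ℝ) (A : Matrix n n ℝ) :
    Matrix.diagonal d + posM (A - Matrix.diagonal d) - negM (A - Matrix.diagonal d) = A := by
  rw [add_sub_assoc, posM_sub_negM, add_sub_cancel]

lemma Matrix.isMetzler_diagonal_add {n : Type*} [DecidableEq n] (d : n → ℝ) {N : Matrix n n ℝ}
    (hN : ∀ i j, 0 ≤ N i j) : (Matrix.diagonal d + N).IsMetzler := by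
  intro i j hij
  simpa [Matrix.diagonal_apply_ne d hij] using hN i j

lemma Matrix.isMetzler_fromBlocks {m n : Type*} {A : Matrix m m ℝ} {B : Matrix m n ℝ}
    {C : Matrix n m ℝ} {D : Matrix n n ℝ} (hA : A.IsMetzler) (hB : ∀ i j, 0 ≤ B i j)
    (hC : ∀ i j, 0 ≤ C i j) (hD : D.IsMetzler) : (Matrix.fromBlocks A B C D).IsMetzler := by
  rintro (i | i) (j | j) hij
  · exact hA (fun h => hij (congrArg Sum.inl h))
  · exact hB i j
  · exact hC i j
  · exact hD (fun h => hij (congrArg Sum.inr h))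

lemma Delta_mul_fromBlocks_self {k : ℕ} (B C : Matrix (Fin k) (Fin k) ℝ) :
    Delta k * Matrix.fromBlocks B C C B = (B - C) * Delta k := by
  rw [Delta, Matrix.fromCols_mul_fromBlocks, Matrix.mul_fromCols]
  simp only [Matrix.one_mul, Matrix.neg_mul, Matrix.mul_one, Matrix.mul_neg, neg_sub]
  rw [← sub_eq_add_neg, ← sub_eq_add_neg]

/-- `Δ_k Γ(A) = A Δ_k`, and `Γ(A)` is a Metzler matrix. -/
theorem delta_GammaM (k : ℕ) (A : Matrix (Fin k) (Fin k) ℝ) :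
    Delta k * GammaM A = A * Delta k ∧
    ∀ i j, i ≠ j → 0 ≤ GammaM A i j := by
  set D := Matrix.diagonal fun i => A i i
  have hMetzler : (D + posM (A - D)).IsMetzler := Matrix.isMetzler_diagonal_add _ (posM_nonneg _)
  refine ⟨?_, Matrix.isMetzler_fromBlocks hMetzler (negM_nonneg _) (negM_nonneg _) hMetzler⟩
  rw [GammaM, Delta_mul_fromBlocks_self, diagonal_add_posM_sub_negM]
end
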